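/- arXiv:2410.07357 — 11 statements merged into one kernel-verified Lean document; each statement's English description precedes it below -/
import Mathlib

section
/- Let (Ω, μ) be a probability space with events A (history of SARS-CoV-2 infection), Y (PASC status), and X (presence of a symptom). Assume: (i) 0 < μ(A) < 1; (ii) μ(Y | Aᶜ) = 0; (iii) setting π = μ(Y | A), 0 < π < 1; (iv) conditionally on Y and conditionally on Yᶜ, the events X and A are independent (i.e., μ(X ∩ A | Y) = μ(X | Y)·μ(A | Y) and μ(X ∩ A | Yᶜ) = μ(X | Yᶜ)·μ(A | Yᶜ)); (v) setting β0 = μ(X | Yᶜ), 0 < β0 < 1, and 0 < μ(X) < 1. Let β1 = μ(X | Y)/μ(X | Yᶜ), θ1 = μ(A | X), θ0 = μ(A | Xᶜ), and assume 0 < θ0 < 1 and 0 < θ1 < 1. Then the odds ratio OR = [θ1/(1−θ1)] / [θ0/(1−θ0)] satisfies OR = 1 − π(1 − β1)/(β0·π·(1 − β1) + (1 − β0)). -/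
/-!
Property 1 puts `Y` inside `A` up to a null set, so `μ(Y) = π μ(A)` and `μ(A | Y) = 1`.
Conditioning on `Y` and `Yᶜ` and using Property 2 gives
`μ(A ∩ X) = β0 μ(A) (β1 π + 1 - π)` and `μ(X) = β0 (β1 π μ(A) + 1 - π μ(A))`,
which fill in the whole 2 × 2 table of `A` and `X`:
`μ(Aᶜ ∩ X) = β0 (1 - μ(A))`, `μ(A ∩ Xᶜ) = μ(A) D`, `μ(Aᶜ ∩ Xᶜ) = (1 - β0)(1 - μ(A))`,
with `D = β0 π (1 - β1) + (1 - β0)`. The odds ratio is the cross-product ratio of this table,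
and `θ0 > 0` forces `D ≠ 0`.
-/

open MeasureTheory

/-- Conditional probability `μ(E | F) = μ(E ∩ F) / μ(F)`, as a real number. -/
noncomputable def cpr {Ω : Type*} [MeasurableSpace Ω] (μ : Measure Ω) (E F : Set Ω) : ℝ :=
  (μ (E ∩ F)).toReal / (μ F).toReal

open Set

section ConditionalProbability

variable {Ω : Type*} [MeasurableSpace Ω] {μ : Measure Ω} {F : Set Ω}

lemma cpr_def (E F : Set Ω) : cpr μ E F = μ.real (E ∩ F) / μ.real F := rfl

variable [IsFiniteMeasure μ]

lemma measureReal_inter_add_inter_compl (hF : MeasurableSet F) (E : Set Ω) :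
    μ.real (E ∩ F) + μ.real (E ∩ Fᶜ) = μ.real E :=
  measureReal_inter_add_sdiff hF

lemma cpr_mul_measureReal (E F : Set Ω) : cpr μ E F * μ.real F = μ.real (E ∩ F) := by
  rcases eq_or_ne (μ.real F) 0 with hF | hF
  · rw [hF, measureReal_mono_null inter_subset_right hF, mul_zero]
  · exact div_mul_cancel₀ _ hF

lemma measureReal_inter_inter_of_cpr_inter_eq_mul {E G : Set Ω}
    (h : cpr μ (E ∩ G) F = cpr μ E F * cpr μ G F) :
    μ.real (E ∩ G ∩ F) = cpr μ E F * μ.real (G ∩ F) := by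
  rw [← cpr_mul_measureReal, h, mul_assoc, cpr_mul_measureReal]

lemma measureReal_inter_compl (hF : MeasurableSet F) (E : Set Ω) :
    μ.real (E ∩ Fᶜ) = μ.real E - μ.real (E ∩ F) := by
  rw [← measureReal_inter_add_inter_compl hF E, add_sub_cancel_left]

lemma cpr_odds (E F : Set Ω) :
    cpr μ E F / (1 - cpr μ E F) = μ.real (E ∩ F) / (μ.real F - μ.real (E ∩ F)) := by
  rw [cpr_def]
  rcases eq_or_ne (μ.real F) 0 with hF | hF
  · rw [hF, measureReal_mono_null inter_subset_right hF]
    simp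
  · rw [one_sub_div hF, div_div_div_cancel_right₀ hF]

end ConditionalProbability

lemma odds_ratio_eq_of_marginals {π a β0 β1 m x : ℝ}
    (hm : m = β0 * a * (β1 * π + 1 - π)) (hx : x = β0 * (β1 * π * a + 1 - π * a))
    (ha0 : a ≠ 0) (ha1 : a ≠ 1) (hβ0 : β0 ≠ 0) (hD : β0 * π * (1 - β1) + (1 - β0) ≠ 0) :
    (m / (x - m)) / ((a - m) / (1 - x - (a - m))) =
      1 - π * (1 - β1) / (β0 * π * (1 - β1) + (1 - β0)) := by
  have h1a : 1 - a ≠ 0 := sub_ne_zero.mpr (Ne.symm ha1)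
  have hxm : x - m = β0 * (1 - a) := by rw [hx, hm]; ring
  have ham : a - m = a * (β0 * π * (1 - β1) + (1 - β0)) := by rw [hm]; ring
  have hxam : 1 - x - (a - m) = (1 - β0) * (1 - a) := by rw [hx, hm]; ring
  rw [hxam, hxm, ham, div_div_div_eq, hm]
  field_simp
  ring

theorem odds_ratio_formula_general
    {Ω : Type*} [MeasurableSpace Ω] (μ : Measure Ω) [IsProbabilityMeasure μ]
    (A Y X : Set Ω)
    (hAm : MeasurableSet A) (hYm : MeasurableSet Y) (hXm : MeasurableSet X)
    -- (i) 0 < μ(A) < 1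
    (hA0 : 0 < (μ A).toReal) (hA1 : (μ A).toReal < 1)
    -- (ii) μ(Y | Aᶜ) = 0
    (hProp1 : cpr μ Y Aᶜ = 0)
    -- (iii) π = μ(Y | A), 0 < π < 1
    (π : ℝ) (hπdef : π = cpr μ Y A) (hπ0 : 0 < π)
    -- (iv) X ⫫ A conditionally on Y and on Yᶜ
    (hProp2 : cpr μ (X ∩ A) Y = cpr μ X Y * cpr μ A Y)
    (hProp2c : cpr μ (X ∩ A) Yᶜ = cpr μ X Yᶜ * cpr μ A Yᶜ)
    -- (v) β0 = μ(X | Yᶜ), 0 < β0 < 1, and 0 < μ(X) < 1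
    (β0 : ℝ) (hβ0def : β0 = cpr μ X Yᶜ) (hβ00 : 0 < β0)
    -- β1, θ1, θ0
    (β1 : ℝ) (hβ1def : β1 = cpr μ X Y / cpr μ X Yᶜ)
    (θ1 : ℝ) (hθ1def : θ1 = cpr μ A X)
    (θ0 : ℝ) (hθ0def : θ0 = cpr μ A Xᶜ) (hθ00 : 0 < θ0) :
    (θ1 / (1 - θ1)) / (θ0 / (1 - θ0)) =
      1 - π * (1 - β1) / (β0 * π * (1 - β1) + (1 - β0)) := by
  change 0 < μ.real A at hA0
  change μ.real A < 1 at hA1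
  have hYA : μ.real (Y ∩ A) = μ.real Y := by
    rw [← measureReal_inter_add_inter_compl hAm Y, ← cpr_mul_measureReal Y Aᶜ, hProp1, zero_mul,
      add_zero]
  have hY : μ.real Y = π * μ.real A := by rw [← hYA, ← cpr_mul_measureReal, ← hπdef]
  have hAY : cpr μ A Y = 1 := by
    rw [cpr_def, inter_comm, hYA, div_self (by rw [hY]; positivity)]
  have hXY : cpr μ X Y = β1 * β0 := by rw [hβ1def, ← hβ0def, div_mul_cancel₀ _ hβ00.ne']
  have hm : μ.real (A ∩ X) = β0 * μ.real A * (β1 * π + 1 - π) := by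
    rw [inter_comm, ← measureReal_inter_add_inter_compl hYm,
      measureReal_inter_inter_of_cpr_inter_eq_mul hProp2,
      measureReal_inter_inter_of_cpr_inter_eq_mul hProp2c, ← hβ0def, hXY,
      measureReal_inter_compl hYm, inter_comm A Y, hYA, hY]
    ring
  have hx : μ.real X = β0 * (β1 * π * μ.real A + 1 - π * μ.real A) := by
    rw [← measureReal_inter_add_inter_compl hYm, ← cpr_mul_measureReal, ← cpr_mul_measureReal,
      ← hβ0def, hXY, probReal_compl_eq_one_sub hYm, hY]
    ring
  have hD : β0 * π * (1 - β1) + (1 - β0) ≠ 0 := by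
    have hAXc : μ.real (A ∩ Xᶜ) = μ.real A * (β0 * π * (1 - β1) + (1 - β0)) := by
      rw [measureReal_inter_compl hXm, hm]
      ring
    intro hD
    rw [hθ0def, cpr_def, hAXc, hD, mul_zero, zero_div] at hθ00
    exact hθ00.false
  rw [hθ1def, hθ0def, cpr_odds, cpr_odds, measureReal_inter_compl hXm,
    probReal_compl_eq_one_sub hXm]
  exact odds_ratio_eq_of_marginals hm hx hA0.ne' hA1.ne hβ00.ne' hD

/-- **Theorem 1.** Under Property 1 (no PASC without infection) and Property 2
(symptom depends on infection only through PASC), the observable odds ratio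
`OR_{A,X}` equals `1 − π(1 − β1)/(β0·π·(1 − β1) + (1 − β0))`. -/
theorem odds_ratio_formula
    {Ω : Type*} [MeasurableSpace Ω] (μ : Measure Ω) [IsProbabilityMeasure μ]
    (A Y X : Set Ω)
    (hAm : MeasurableSet A) (hYm : MeasurableSet Y) (hXm : MeasurableSet X)
    -- (i) 0 < μ(A) < 1
    (hA0 : 0 < (μ A).toReal) (hA1 : (μ A).toReal < 1)
    -- (ii) μ(Y | Aᶜ) = 0
    (hProp1 : cpr μ Y Aᶜ = 0)
    -- (iii) π = μ(Y | A), 0 < π < 1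
    (π : ℝ) (hπdef : π = cpr μ Y A) (hπ0 : 0 < π) (hπ1 : π < 1)
    -- (iv) X ⫫ A conditionally on Y and on Yᶜ
    (hProp2 : cpr μ (X ∩ A) Y = cpr μ X Y * cpr μ A Y)
    (hProp2c : cpr μ (X ∩ A) Yᶜ = cpr μ X Yᶜ * cpr μ A Yᶜ)
    -- (v) β0 = μ(X | Yᶜ), 0 < β0 < 1, and 0 < μ(X) < 1
    (β0 : ℝ) (hβ0def : β0 = cpr μ X Yᶜ) (hβ00 : 0 < β0) (hβ01 : β0 < 1)
    (hX0 : 0 < (μ X).toReal) (hX1 : (μ X).toReal < 1)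
    -- β1, θ1, θ0
    (β1 : ℝ) (hβ1def : β1 = cpr μ X Y / cpr μ X Yᶜ)
    (θ1 : ℝ) (hθ1def : θ1 = cpr μ A X) (hθ10 : 0 < θ1) (hθ11 : θ1 < 1)
    (θ0 : ℝ) (hθ0def : θ0 = cpr μ A Xᶜ) (hθ00 : 0 < θ0) (hθ01 : θ0 < 1) :
    (θ1 / (1 - θ1)) / (θ0 / (1 - θ0)) =
      1 - π * (1 - β1) / (β0 * π * (1 - β1) + (1 - β0)) :=
  odds_ratio_formula_general μ A Y X hAm hYm hXm hA0 hA1 hProp1 π hπdef hπ0 hProp2 hProp2c β0 hβ0def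
    hβ00 β1 hβ1def θ1 hθ1def θ0 hθ0def hθ00
end

section
/- If β0 < 1 − π/(1 − π), then for every β1 with 0 < β1 ≤ 1/β0 and β1 ≠ 1, |β1 − 1| > |OR(π, β0, β1) − 1|; that is, the odds ratio is biased toward the null for all possible values of β1. -/
/-- Odds ratio between infection and a symptom, from Theorem 1. -/
noncomputable def oddsRatio (pi beta0 beta1 : ℝ) : ℝ :=
  1 - pi * (1 - beta1) / (beta0 * pi * (1 - beta1) + (1 - beta0))

/-- Corollary 3: if `β0 < 1 − π/(1 − π)` then the odds ratio is biased
toward the null for all possible values of `β1`. -/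
theorem biased_toward_null_for_all_beta1
    (pi beta0 : ℝ)
    (hpi0 : 0 < pi) (hpi1 : pi < 1)
    (hb00 : 0 < beta0) (hb01 : beta0 < 1)
    (hcond : beta0 < 1 - pi / (1 - pi)) :
    ∀ beta1 : ℝ, 0 < beta1 → beta1 ≤ 1 / beta0 → beta1 ≠ 1 →
      |beta1 - 1| > |oddsRatio pi beta0 beta1 - 1| := by
  intro b1 hb10 hb1le hb1ne
  have h1pi : (0:ℝ) < 1 - pi := by linarith
  have hcond' : pi < (1 - beta0) * (1 - pi) := by
    have h1 : pi / (1 - pi) < 1 - beta0 := by linarith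
    have := (div_lt_iff₀ h1pi).mp h1
    linarith [this]
  have hbb : b1 * beta0 ≤ 1 := (le_div_iff₀ hb00).mp hb1le
  set D := beta0 * pi * (1 - b1) + (1 - beta0) with hDdef
  have hD : pi < D := by nlinarith [mul_pos hpi0 hb00]
  have hD0 : (0:ℝ) < D := by linarith
  have hkey : oddsRatio pi beta0 b1 - 1 = -(pi * (1 - b1)) / D := by
    unfold oddsRatio
    rw [← hDdef]
    ring
  rw [hkey, abs_div, abs_neg, abs_of_pos hD0, abs_mul, abs_of_pos hpi0,
    abs_sub_comm 1 b1]
  have habs : 0 < |b1 - 1| := abs_pos.mpr (sub_ne_zero.mpr hb1ne)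
  rw [gt_iff_lt, div_lt_iff₀ hD0]
  nlinarith
end

section
/- Let Z be a finite nonempty type of confounder strata and let p : {0,1} × {0,1} × Z → ℝ be a joint probability mass function for (X, A, Z) (nonnegative, summing to 1), with Pr(A = a, Z = z) > 0 for every a ∈ {0,1} and z ∈ Z. Define balancing weights w(a, z) = Pr(A = 1 | Z = z)/Pr(A = a | Z = z), the weighted conditional probabilities θ⁽ʷ⁾ₓ = [Σ_z w(1,z)·p(x,1,z)] / [Σ_{a'∈{0,1}} Σ_z w(a',z)·p(x,a',z)] for x ∈ {0,1}, assumed to lie strictly between 0 and 1, and the weighted odds ratio OR⁽ʷ⁾ = [θ⁽ʷ⁾₁/(1 − θ⁽ʷ⁾₁)] / [θ⁽ʷ⁾₀/(1 − θ⁽ʷ⁾₀)]. Assume additionally that Pr(X = 0 | A = 1) > 0 and Σ_z w(0,z)·p(0,0,z) > 0. Then OR⁽ʷ⁾ = [Pr(X = 1 | A = 1)/Pr(X = 0 | A = 1)] / [Σ_z w(0,z)·p(1,0,z) / Σ_z w(0,z)·p(0,0,z)], i.e., the balancing-weighted odds ratio equals the marginal odds ratio estimated by inverse probability of treatment weighting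 with infection A as treatment and symptom X as outcome. -/
/-!
With the balancing weights, the exposed arm gets weight `w(1, z) = 1`, so the weighted
numerator of `θ⁽ʷ⁾ₓ` is the plain count `S₁(x) = Σ_z p(x,1,z)` and its denominator is
`S₁(x) + S₀(x)` with `S₀(x) = Σ_z w(0,z) p(x,0,z)`. Hence the weighted odds of `θ⁽ʷ⁾ₓ` are
`S₁(x) / S₀(x)`, and regrouping the ratio of odds as `(S₁(1)/S₁(0)) / (S₀(1)/S₀(0))` gives the
IPTW odds ratio, since `S₁(1)/S₁(0)` is the odds of `X` given `A = 1`.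
-/

theorem odds_eq_div_of_eq_div_add {K : Type*} [Field K] {θ s r : K}
    (hθ : θ = s / (s + r)) (hθ_ne : θ ≠ 0) : θ / (1 - θ) = s / r := by
  have hsr : s + r ≠ 0 := fun h => hθ_ne (by rw [hθ, h, div_zero])
  rw [hθ, one_sub_div hsr, add_sub_cancel_left, div_div_div_cancel_right₀ hsr]

theorem sum_sum_pos_of_forall_sum_pos {ι κ : Type*} [Fintype ι] [Fintype κ] [Nonempty κ]
    (f : ι → κ → ℝ) (h : ∀ a, 0 < ∑ x, f x a) : 0 < ∑ x, ∑ a, f x a := by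
  rw [Finset.sum_comm]
  exact Finset.sum_pos (fun a _ => h a) Finset.univ_nonempty

theorem weighted_or_eq_iptw_or_general
    {Z : Type*} [Fintype Z]
    (p : Bool → Bool → Z → ℝ)
    -- Pr(A = a, Z = z) > 0 for every a, z
    (hAZ_pos : ∀ (a : Bool) (z : Z), 0 < ∑ x : Bool, p x a z)
    -- balancing weights w(a, z) = Pr(A = 1 | Z = z) / Pr(A = a | Z = z)
    (w : Bool → Z → ℝ)
    (hw : ∀ (a : Bool) (z : Z),
      w a z = ((∑ x : Bool, p x true z) / (∑ x : Bool, ∑ a' : Bool, p x a' z)) /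
              ((∑ x : Bool, p x a z) / (∑ x : Bool, ∑ a' : Bool, p x a' z)))
    -- weighted conditional probabilities θ⁽ʷ⁾ₓ, assumed strictly in (0, 1)
    (θ : Bool → ℝ)
    (hθ : ∀ x : Bool,
      θ x = (∑ z : Z, w true z * p x true z) /
            (∑ a' : Bool, ∑ z : Z, w a' z * p x a' z))
    (hθ0 : ∀ x : Bool, 0 < θ x)
    -- weighted odds ratio
    (ORw : ℝ)
    (hORw : ORw = (θ true / (1 - θ true)) / (θ false / (1 - θ false)))
    -- conditional distribution of X given A = 1
    (prXgivenA1 : Bool → ℝ)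
    (hpr : ∀ x : Bool,
      prXgivenA1 x = (∑ z : Z, p x true z) / (∑ x' : Bool, ∑ z : Z, p x' true z))
    -- positivity assumptions
    (hpr0 : 0 < prXgivenA1 false) :
    ORw = (prXgivenA1 true / prXgivenA1 false) /
      ((∑ z : Z, w false z * p true false z) / (∑ z : Z, w false z * p false false z)) := by
  have hw_true : ∀ z, w true z = 1 := fun z => by
    rw [hw]
    have hZ := sum_sum_pos_of_forall_sum_pos (p · · z) (hAZ_pos · z)
    exact div_self (div_pos (hAZ_pos true z) hZ).ne'
  have hθ_eq : ∀ x, θ x = (∑ z, p x true z) /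
      ((∑ z, p x true z) + ∑ z, w false z * p x false z) := fun x => by
    simp only [hθ, Fintype.sum_bool, hw_true, one_mul]
  have hodds : ∀ x, θ x / (1 - θ x) =
      (∑ z, p x true z) / ∑ z, w false z * p x false z := fun x =>
    odds_eq_div_of_eq_div_add (hθ_eq x) (hθ0 x).ne'
  have hA1 : (∑ x' : Bool, ∑ z : Z, p x' true z) ≠ 0 := fun h => by
    rw [hpr, h, div_zero] at hpr0
    exact lt_irrefl 0 hpr0
  rw [hORw, hodds, hodds, hpr, hpr, div_div_div_cancel_right₀ hA1, div_div_div_comm]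

/-- The balancing-weighted odds ratio between infection `A` and symptom `X`
equals the marginal odds ratio estimated by inverse probability of treatment
weighting with infection as treatment and symptom as outcome.

Here `Z` is a finite nonempty type of confounder strata and `p x a z` is the
joint probability mass function of `(X, A, Z)`, with `x a : Bool` (`true` = 1,
`false` = 0). -/
theorem weighted_or_eq_iptw_or
    {Z : Type*} [Fintype Z] [Nonempty Z]
    (p : Bool → Bool → Z → ℝ)
    -- p is a pmf
    (hp_nonneg : ∀ x a z, 0 ≤ p x a z)
    (hp_sum : ∑ x : Bool, ∑ a : Bool, ∑ z : Z, p x a z = 1)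
    -- Pr(A = a, Z = z) > 0 for every a, z
    (hAZ_pos : ∀ (a : Bool) (z : Z), 0 < ∑ x : Bool, p x a z)
    -- balancing weights w(a, z) = Pr(A = 1 | Z = z) / Pr(A = a | Z = z)
    (w : Bool → Z → ℝ)
    (hw : ∀ (a : Bool) (z : Z),
      w a z = ((∑ x : Bool, p x true z) / (∑ x : Bool, ∑ a' : Bool, p x a' z)) /
              ((∑ x : Bool, p x a z) / (∑ x : Bool, ∑ a' : Bool, p x a' z)))
    -- weighted conditional probabilities θ⁽ʷ⁾ₓ, assumed strictly in (0, 1)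
    (θ : Bool → ℝ)
    (hθ : ∀ x : Bool,
      θ x = (∑ z : Z, w true z * p x true z) /
            (∑ a' : Bool, ∑ z : Z, w a' z * p x a' z))
    (hθ0 : ∀ x : Bool, 0 < θ x) (hθ1 : ∀ x : Bool, θ x < 1)
    -- weighted odds ratio
    (ORw : ℝ)
    (hORw : ORw = (θ true / (1 - θ true)) / (θ false / (1 - θ false)))
    -- conditional distribution of X given A = 1
    (prXgivenA1 : Bool → ℝ)
    (hpr : ∀ x : Bool,
      prXgivenA1 x = (∑ z : Z, p x true z) / (∑ x' : Bool, ∑ z : Z, p x' true z))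
    -- positivity assumptions
    (hpr0 : 0 < prXgivenA1 false)
    (hden : 0 < ∑ z : Z, w false z * p false false z) :
    ORw = (prXgivenA1 true / prXgivenA1 false) /
      ((∑ z : Z, w false z * p true false z) / (∑ z : Z, w false z * p false false z)) :=
  weighted_or_eq_iptw_or_general p hAZ_pos w hw θ hθ hθ0 ORw hORw prXgivenA1 hpr hpr0
end

section
/- (Case 1 of the casewise proof of Corollary 2.) If 1 − π < β0 (equivalently 0 < φ < 1) and 0 < β1 < φ, then β1 < OR(π, β0, β1) and |β1 − 1| > |OR(π, β0, β1) − 1|. -/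
/-- Threshold `φ = ((1 − π)/π)·((1 − β0)/β0)` from Corollary 2. -/
noncomputable def phi (pi beta0 : ℝ) : ℝ :=
  ((1 - pi) / pi) * ((1 - beta0) / beta0)

/-- Case 1 of Corollary 2: `1 − π < β0` (so `0 < φ < 1`) and `β1 < φ`. -/
theorem case1_cor2
    (pi beta0 beta1 : ℝ)
    (hpi0 : 0 < pi) (hpi1 : pi < 1)
    (hb00 : 0 < beta0) (hb01 : beta0 < 1)
    (hb10 : 0 < beta1) (hb1u : beta1 ≤ 1 / beta0)
    (hphi : 1 - pi < beta0) (hlt : beta1 < phi pi beta0) :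
    beta1 < oddsRatio pi beta0 beta1 ∧ |beta1 - 1| > |oddsRatio pi beta0 beta1 - 1| := by
  have hlt' : beta1 * (pi * beta0) < (1 - pi) * (1 - beta0) := by
    rw [phi, div_mul_div_comm] at hlt
    rw [← lt_div_iff₀ (by positivity)]
    exact hlt
  have hphi1 : phi pi beta0 < 1 := by
    rw [phi, div_mul_div_comm, div_lt_one (by positivity)]
    nlinarith
  have hb11 : beta1 < 1 := hlt.trans hphi1
  have hD0 : 0 < beta0 * pi * (1 - beta1) + (1 - beta0) := by nlinarith
  have hDpi : pi < beta0 * pi * (1 - beta1) + (1 - beta0) := by nlinarith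
  have hkey : pi * (1 - beta1) / (beta0 * pi * (1 - beta1) + (1 - beta0)) < 1 - beta1 := by
    rw [div_lt_iff₀ hD0]
    nlinarith
  have hor : beta1 < oddsRatio pi beta0 beta1 := by
    rw [oddsRatio]; linarith
  have hor1 : oddsRatio pi beta0 beta1 < 1 := by
    rw [oddsRatio]
    have : 0 < pi * (1 - beta1) / (beta0 * pi * (1 - beta1) + (1 - beta0)) := div_pos (by nlinarith) hD0
    linarith
  refine ⟨hor, ?_⟩
  rw [abs_of_nonpos (by linarith), abs_of_nonpos (by linarith)]
  linarith
end

section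
/- (Case 2 of the casewise proof of Corollary 2.) If 1 − π < β0 (equivalently 0 < φ < 1) and φ < β1 < 1, then β1 > OR(π, β0, β1) and |β1 − 1| < |OR(π, β0, β1) − 1|. -/
/-- Case 2 of Corollary 2: `1 − π < β0` (so `0 < φ < 1`) and `φ < β1 < 1`. -/
theorem case2_cor2
    (pi beta0 beta1 : ℝ)
    (hpi0 : 0 < pi) (hpi1 : pi < 1)
    (hb00 : 0 < beta0) (hb01 : beta0 < 1)
    (hb10 : 0 < beta1) (hb1u : beta1 ≤ 1 / beta0)
    (hphi : 1 - pi < beta0) (hgt : phi pi beta0 < beta1) (hlt1 : beta1 < 1) :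
    beta1 > oddsRatio pi beta0 beta1 ∧ |beta1 - 1| < |oddsRatio pi beta0 beta1 - 1| := by
  have ht : 0 < 1 - beta1 := by linarith
  have hD : 0 < beta0 * pi * (1 - beta1) + (1 - beta0) := by nlinarith [mul_pos (mul_pos hb00 hpi0) ht]
  have h1 : (1 - pi) * (1 - beta0) < pi * beta0 * beta1 := by
    unfold phi at hgt
    rw [div_mul_div_comm, div_lt_iff₀ (by positivity)] at hgt
    nlinarith
  have hDlt : beta0 * pi * (1 - beta1) + (1 - beta0) < pi := by nlinarith [mul_pos (mul_pos hb00 hpi0) ht]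
  have key : 1 - beta1 < pi * (1 - beta1) / (beta0 * pi * (1 - beta1) + (1 - beta0)) := by
    rw [lt_div_iff₀ hD]; nlinarith
  have hORlt : oddsRatio pi beta0 beta1 < beta1 := by
    unfold oddsRatio; linarith
  refine ⟨hORlt, ?_⟩
  have hpos : 0 < pi * (1 - beta1) / (beta0 * pi * (1 - beta1) + (1 - beta0)) := by positivity
  rw [abs_of_neg (by linarith), abs_of_neg (by unfold oddsRatio; linarith)]
  unfold oddsRatio
  linarith
end

section
/- (Case 3 of the casewise proof of Corollary 2.) If 1 − π < β0 (equivalently 0 < φ < 1) and 1 < β1, then β1 < OR(π, β0, β1) and |β1 − 1| < |OR(π, β0, β1) − 1|. -/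
/-- Case 3 of Corollary 2: `1 − π < β0` (so `0 < φ < 1`) and `1 < β1`. -/
theorem case3_cor2
    (pi beta0 beta1 : ℝ)
    (hpi0 : 0 < pi) (hpi1 : pi < 1)
    (hb00 : 0 < beta0) (hb01 : beta0 < 1)
    (hb10 : 0 < beta1) (hb1u : beta1 ≤ 1 / beta0)
    (hphi : 1 - pi < beta0) (hgt1 : 1 < beta1) :
    beta1 < oddsRatio pi beta0 beta1 ∧ |beta1 - 1| < |oddsRatio pi beta0 beta1 - 1| := by
  have hbb : beta1 * beta0 ≤ 1 := (le_div_iff₀ hb00).mp hb1u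
  have hD : 0 < beta0 * pi * (1 - beta1) + (1 - beta0) := by nlinarith
  have h1 : beta1 < oddsRatio pi beta0 beta1 := by
    rw [oddsRatio, lt_sub_comm, div_lt_iff₀ hD]
    nlinarith [mul_pos (sub_pos.mpr hgt1) (show (0:ℝ) < pi - (1 - beta0) by linarith),
      mul_pos (mul_pos hb00 hpi0) (mul_pos (sub_pos.mpr hgt1) (sub_pos.mpr hgt1))]
  refine ⟨h1, ?_⟩
  rw [abs_of_pos (by linarith), abs_of_pos (by linarith)]
  linarith
end

section
/- (Case 4 of the casewise proof of Corollary 2.) If 1 − π = β0 (equivalently φ = 1) and 0 < β1 < 1, then β1 < OR(π, β0, β1) and |β1 − 1| > |OR(π, β0, β1) − 1|. -/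
/-- Case 4 of Corollary 2: `1 − π = β0` (so `φ = 1`) and `0 < β1 < 1`. -/
theorem case4_cor2
    (pi beta0 beta1 : ℝ)
    (hpi0 : 0 < pi) (hpi1 : pi < 1)
    (hb00 : 0 < beta0) (hb01 : beta0 < 1)
    (hb10 : 0 < beta1) (hb1u : beta1 ≤ 1 / beta0)
    (hphi : 1 - pi = beta0) (hlt1 : beta1 < 1) :
    beta1 < oddsRatio pi beta0 beta1 ∧ |beta1 - 1| > |oddsRatio pi beta0 beta1 - 1| := by
  have hb0 : 1 - beta0 = pi := by linarith
  have ht0 : 0 < 1 - beta1 := by linarith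
  have hD : 0 < beta0 * pi * (1 - beta1) + (1 - beta0) := by nlinarith [mul_pos (mul_pos hb00 hpi0) ht0]
  have key : pi * (1 - beta1) / (beta0 * pi * (1 - beta1) + (1 - beta0)) < 1 - beta1 := by
    rw [div_lt_iff₀ hD]; nlinarith [mul_pos (mul_pos (mul_pos hb00 hpi0) ht0) ht0]
  have hpos : 0 < pi * (1 - beta1) / (beta0 * pi * (1 - beta1) + (1 - beta0)) :=
    div_pos (by positivity) hD
  unfold oddsRatio
  constructor
  · linarith
  · have h1 : |beta1 - 1| = 1 - beta1 := by rw [abs_of_neg (by linarith)]; ring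
    have h2 : |1 - pi * (1 - beta1) / (beta0 * pi * (1 - beta1) + (1 - beta0)) - 1|
        = pi * (1 - beta1) / (beta0 * pi * (1 - beta1) + (1 - beta0)) := by
      rw [abs_of_neg (by linarith)]; ring
    rw [h1, h2]; linarith
end

section
/- (Case 5 of the casewise proof of Corollary 2.) If 1 − π = β0 (equivalently φ = 1) and 1 < β1 ≤ 1/β0, then β1 < OR(π, β0, β1) and |β1 − 1| < |OR(π, β0, β1) − 1|. -/
/-- Case 5 of Corollary 2: `1 − π = β0` (so `φ = 1`) and `1 < β1 ≤ 1/β0`. -/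
theorem case5_cor2
    (pi beta0 beta1 : ℝ)
    (hpi0 : 0 < pi) (hpi1 : pi < 1)
    (hb00 : 0 < beta0) (hb01 : beta0 < 1)
    (hb10 : 0 < beta1) (hb1u : beta1 ≤ 1 / beta0)
    (hphi : 1 - pi = beta0) (hgt1 : 1 < beta1) :
    beta1 < oddsRatio pi beta0 beta1 ∧ |beta1 - 1| < |oddsRatio pi beta0 beta1 - 1| := by
  have hb0b1 : beta0 * beta1 ≤ 1 := by
    have := (le_div_iff₀ hb00).mp hb1u
    linarith [this]
  set E : ℝ := 1 - beta0 * (beta1 - 1) with hEdef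
  have hEpos : 0 < E := by simp only [hEdef]; nlinarith
  have hElt1 : E < 1 := by simp only [hEdef]; nlinarith
  have hD : beta0 * pi * (1 - beta1) + (1 - beta0) = pi * E := by
    simp only [hEdef]; rw [← hphi]; ring
  have hq : pi * (1 - beta1) / (pi * E) = (1 - beta1) / E :=
    mul_div_mul_left _ _ (ne_of_gt hpi0)
  have hr : (1 - beta1) / E * E = 1 - beta1 := div_mul_cancel₀ _ (ne_of_gt hEpos)
  have hrneg : (1 - beta1) / E < 1 - beta1 := by
    rw [div_lt_iff₀ hEpos] at *
    nlinarith
  have hmain : beta1 < oddsRatio pi beta0 beta1 := by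
    rw [oddsRatio, hD, hq]
    linarith
  refine ⟨hmain, ?_⟩
  rw [abs_of_pos (by linarith), abs_of_pos (by linarith)]
  linarith
end

section
/- (Case 6 of the casewise proof of Corollary 2.) If 1 < φ ≤ 1/β0 and 0 < β1 < 1, then β1 < OR(π, β0, β1) and |β1 − 1| > |OR(π, β0, β1) − 1|. -/
/-- Case 6 of Corollary 2: `1 < φ ≤ 1/β0` and `0 < β1 < 1`. -/
theorem case6_cor2
    (pi beta0 beta1 : ℝ)
    (hpi0 : 0 < pi) (hpi1 : pi < 1)
    (hb00 : 0 < beta0) (hb01 : beta0 < 1)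
    (hb10 : 0 < beta1) (hb1u : beta1 ≤ 1 / beta0)
    (hphi1 : 1 < phi pi beta0) (hphi2 : phi pi beta0 ≤ 1 / beta0)
    (hlt1 : beta1 < 1) :
    beta1 < oddsRatio pi beta0 beta1 ∧ |beta1 - 1| > |oddsRatio pi beta0 beta1 - 1| := by
  have h1 : pi * beta0 < (1 - pi) * (1 - beta0) := by
    rw [phi, div_mul_div_comm, lt_div_iff₀ (by positivity)] at hphi1
    linarith
  have hD : 0 < beta0 * pi * (1 - beta1) + (1 - beta0) := by nlinarith [mul_pos (mul_pos hb00 hpi0) (sub_pos.2 hlt1)]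
  have hDpi : pi < beta0 * pi * (1 - beta1) + (1 - beta0) := by nlinarith [mul_pos (mul_pos hpi0 hb00) (sub_pos.2 hlt1)]
  have key : pi * (1 - beta1) / (beta0 * pi * (1 - beta1) + (1 - beta0)) < 1 - beta1 := by
    rw [div_lt_iff₀ hD]; nlinarith
  have hpos : 0 < pi * (1 - beta1) / (beta0 * pi * (1 - beta1) + (1 - beta0)) := by
    apply div_pos _ hD
    exact mul_pos hpi0 (by linarith)
  rw [oddsRatio]
  constructor
  · linarith
  · rw [abs_of_neg (by linarith), abs_of_neg (by linarith)]
    linarith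
end

section
/- (Case 7 of the casewise proof of Corollary 2.) If 1 < φ ≤ 1/β0 and 1 < β1 < φ, then β1 > OR(π, β0, β1) and |β1 − 1| > |OR(π, β0, β1) − 1|. -/
/-- Case 7 of Corollary 2: `1 < φ ≤ 1/β0` and `1 < β1 < φ`. -/
theorem case7_cor2
    (pi beta0 beta1 : ℝ)
    (hpi0 : 0 < pi) (hpi1 : pi < 1)
    (hb00 : 0 < beta0) (hb01 : beta0 < 1)
    (hb10 : 0 < beta1) (hb1u : beta1 ≤ 1 / beta0)
    (hphi1 : 1 < phi pi beta0) (hphi2 : phi pi beta0 ≤ 1 / beta0)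
    (hgt1 : 1 < beta1) (hltphi : beta1 < phi pi beta0) :
    beta1 > oddsRatio pi beta0 beta1 ∧ |beta1 - 1| > |oddsRatio pi beta0 beta1 - 1| := by
  have hphi : beta1 < ((1 - pi) / pi) * ((1 - beta0) / beta0) := hltphi
  rw [div_mul_div_comm, lt_div_iff₀ (by positivity)] at hphi
  have hDpi : pi < beta0 * pi * (1 - beta1) + (1 - beta0) := by nlinarith
  have hD : 0 < beta0 * pi * (1 - beta1) + (1 - beta0) := by linarith
  have hOR : oddsRatio pi beta0 beta1 < beta1 := by
    unfold oddsRatio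
    have key : 1 - beta1 < pi * (1 - beta1) / (beta0 * pi * (1 - beta1) + (1 - beta0)) := by
      rw [lt_div_iff₀ hD]; nlinarith
    linarith
  have hOR1 : 1 < oddsRatio pi beta0 beta1 := by
    unfold oddsRatio
    have : pi * (1 - beta1) / (beta0 * pi * (1 - beta1) + (1 - beta0)) < 0 :=
      div_neg_of_neg_of_pos (by nlinarith) hD
    linarith
  refine ⟨hOR, ?_⟩
  rw [abs_of_pos (by linarith), abs_of_pos (by linarith)]
  linarith
end

section
/- (Case 8 of the casewise proof of Corollary 2.) If 1 < φ ≤ 1/β0 and φ < β1 ≤ 1/β0, then β1 < OR(π, β0, β1) and |β1 − 1| < |OR(π, β0, β1) − 1|. -/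
/-- Case 8 of Corollary 2: `1 < φ ≤ 1/β0` and `φ < β1 ≤ 1/β0`. -/
theorem case8_cor2
    (pi beta0 beta1 : ℝ)
    (hpi0 : 0 < pi) (hpi1 : pi < 1)
    (hb00 : 0 < beta0) (hb01 : beta0 < 1)
    (hb10 : 0 < beta1) (hb1u : beta1 ≤ 1 / beta0)
    (hphi1 : 1 < phi pi beta0) (hphi2 : phi pi beta0 ≤ 1 / beta0)
    (hgtphi : phi pi beta0 < beta1) :
    beta1 < oddsRatio pi beta0 beta1 ∧ |beta1 - 1| < |oddsRatio pi beta0 beta1 - 1| := by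
  have hb1 : 1 < beta1 := lt_trans hphi1 hgtphi
  have hbu : beta0 * beta1 ≤ 1 := by
    rw [le_div_iff₀ hb00] at hb1u; linarith [mul_comm beta0 beta1]
  have hD : 0 < beta0 * pi * (1 - beta1) + (1 - beta0) := by nlinarith
  rw [phi, div_mul_div_comm, div_lt_iff₀ (by positivity)] at hgtphi
  have hDpi : beta0 * pi * (1 - beta1) + (1 - beta0) < pi := by nlinarith
  have hOR : beta1 < oddsRatio pi beta0 beta1 := by
    rw [oddsRatio, lt_sub_iff_add_lt, ← lt_sub_iff_add_lt', div_lt_iff₀ hD]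
    nlinarith
  refine ⟨hOR, ?_⟩
  rw [abs_of_pos (by linarith), abs_of_pos (by linarith)]
  linarith
end
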